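/- There is a well-defined group homomorphism from K_n to the symmetric group on {1,…,n} sending each generator t(a,b) to the permutation σ_{a,b}. -/

import Mathlib

/-- Generators `t(a,b)` of `K_n`: pairs `(a,b)` with `0 ≤ a < b ≤ n`. -/
def Gen (n : ℕ) := {p : ℕ × ℕ // p.1 < p.2 ∧ p.2 ≤ n}

/-- The free-group letter corresponding to the generator `t(a,b)`. -/
def tg {n : ℕ} (a b : ℕ) (h : a < b ∧ b ≤ n) : FreeGroup (Gen n) :=
  FreeGroup.of ⟨(a, b), h⟩

/-- The defining relators of `K_n`. -/
def rels (n : ℕ) : Set (FreeGroup (Gen n)) :=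
  {w | ∃ g : Gen n, w = FreeGroup.of g * FreeGroup.of g} ∪
  {w | ∃ a b c d : ℕ, ∃ h : a < b ∧ b ≤ c ∧ c < d ∧ d ≤ n,
      w = tg a b ⟨h.1, by omega⟩ * tg c d ⟨h.2.2.1, h.2.2.2⟩ *
          tg a b ⟨h.1, by omega⟩ * tg c d ⟨h.2.2.1, h.2.2.2⟩} ∪
  {w | ∃ a b x y : ℕ, ∃ h : a < a + x + y ∧ a + x + y < b ∧ b ≤ n,
      w = tg a b ⟨by omega, h.2.2⟩ * tg (a + x) (b - y) ⟨by omega, by omega⟩ *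
          tg a b ⟨by omega, h.2.2⟩ * tg (a + y) (b - x) ⟨by omega, by omega⟩} ∪
  {w | ∃ a b x y z : ℕ, ∃ h : 0 < x ∧ 0 < y ∧ 0 < z ∧ b = a + x + y + z ∧ b ≤ n,
      w = tg a (b - z) ⟨by omega, by omega⟩ * tg (a + y) b ⟨by omega, h.2.2.2.2⟩ *
          tg a (b - x) ⟨by omega, by omega⟩ * tg (a + z) b ⟨by omega, h.2.2.2.2⟩ *
          tg a (b - y) ⟨by omega, by omega⟩ * tg (a + x) b ⟨by omega, h.2.2.2.2⟩}

/-- The group `K_n`. -/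
abbrev K (n : ℕ) := PresentedGroup (rels n)

/-- `σ_{a,b}` as a map on `ℤ`. -/
def sigmaMap (a b x : ℤ) : ℤ := if a + 1 ≤ x ∧ x ≤ b then a + b + 1 - x else x


/-!
On `ℤ`, `sigmaMap a b` is the reflection of the interval `[a + 1, b]` and the identity outside it.
Each defining relator of `K n` therefore becomes an identity between compositions of such
reflections: reflections of disjoint intervals commute, conjugating a reflection by the
reflection of an enclosing interval reflects the smaller interval, and the six-term relator is
an identity among reflections of intervals that start at `a + 1` or end at `b`. All of these are
piecewise-linear identities that a case split on the defining conditions settles.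
-/

lemma sigmaMap_involutive (a b : ℤ) : Function.Involutive (sigmaMap a b) := by
  intro x
  unfold sigmaMap
  split_ifs <;> omega

lemma sigmaMap_mem_Icc {n a b x : ℤ} (ha : 0 ≤ a) (hb : b ≤ n) (hx : x ∈ Set.Icc 1 n) :
    sigmaMap a b x ∈ Set.Icc 1 n := by
  rw [Set.mem_Icc] at hx ⊢
  unfold sigmaMap
  split_ifs <;> omega

lemma sigmaMap_comm_of_le {a b c d : ℤ} (hbc : b ≤ c) (x : ℤ) :
    sigmaMap a b (sigmaMap c d x) = sigmaMap c d (sigmaMap a b x) := by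
  unfold sigmaMap
  split_ifs <;> omega

lemma sigmaMap_conj {a b x y : ℤ} (hx : 0 ≤ x) (hy : 0 ≤ y) (p : ℤ) :
    sigmaMap a b (sigmaMap (a + x) (b - y) (sigmaMap a b p)) = sigmaMap (a + y) (b - x) p := by
  unfold sigmaMap
  split_ifs <;> omega

lemma sigmaMap_hexagon {a b x y z : ℤ} (hx : 0 ≤ x) (hy : 0 ≤ y) (hz : 0 ≤ z)
    (hb : b = a + x + y + z) (p : ℤ) :
    sigmaMap a (b - z) (sigmaMap (a + y) b (sigmaMap a (b - x) (sigmaMap (a + z) b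
      (sigmaMap a (b - y) (sigmaMap (a + x) b p))))) = p := by
  unfold sigmaMap
  split_ifs <;> omega

def sigmaPerm (n : ℕ) (g : Gen n) : Equiv.Perm (Set.Icc (1 : ℤ) n) :=
  Function.Involutive.toPerm
    (fun x => ⟨sigmaMap g.1.1 g.1.2 x,
      sigmaMap_mem_Icc (Int.natCast_nonneg _) (by exact_mod_cast g.2.2) x.2⟩)
    (fun x => Subtype.ext (sigmaMap_involutive _ _ x))

lemma lift_sigmaPerm_tg_apply {n a b : ℕ} (h : a < b ∧ b ≤ n) (x : Set.Icc (1 : ℤ) n) :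
    (FreeGroup.lift (sigmaPerm n) (tg a b h) x : ℤ) = sigmaMap a b x :=
  congrArg (fun σ : Equiv.Perm (Set.Icc (1 : ℤ) n) => (σ x : ℤ)) FreeGroup.lift_apply_of

lemma lift_sigmaPerm_eq_one_of_mem_rels {n : ℕ} {r : FreeGroup (Gen n)} (hr : r ∈ rels n) :
    FreeGroup.lift (sigmaPerm n) r = 1 := by
  rcases hr with ((⟨g, rfl⟩ | ⟨a, b, c, d, h, rfl⟩) | ⟨a, b, x, y, h, rfl⟩) |
      ⟨a, b, x, y, z, h, rfl⟩ <;>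
    refine Equiv.ext fun p => Subtype.ext ?_ <;>
    simp only [map_mul, Equiv.Perm.mul_apply, Equiv.Perm.one_apply, lift_sigmaPerm_tg_apply]
  · exact sigmaMap_involutive _ _ _
  · rw [sigmaMap_comm_of_le (by exact_mod_cast h.2.1), sigmaMap_involutive, sigmaMap_involutive]
  · push_cast [Nat.cast_sub (by omega : x ≤ b), Nat.cast_sub (by omega : y ≤ b)]
    rw [sigmaMap_conj (by positivity) (by positivity), sigmaMap_involutive]
  · push_cast [Nat.cast_sub (by omega : x ≤ b), Nat.cast_sub (by omega : y ≤ b),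
      Nat.cast_sub (by omega : z ≤ b)]
    exact sigmaMap_hexagon (by positivity) (by positivity) (by positivity)
      (by exact_mod_cast h.2.2.2.1) _

theorem stmt_4 (n : ℕ) :
    ∃ φ : K n →* Equiv.Perm (Set.Icc (1 : ℤ) n),
      ∀ (g : Gen n) (x : Set.Icc (1 : ℤ) n),
        ((φ (PresentedGroup.of g)) x : ℤ) = sigmaMap (g.1.1 : ℤ) (g.1.2 : ℤ) (x : ℤ) := by
  refine ⟨PresentedGroup.toGroup fun _ hr => lift_sigmaPerm_eq_one_of_mem_rels hr,
    fun g x => ?_⟩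
  rw [PresentedGroup.toGroup.of]
  rfl
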